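/- Let i, ℓ, m be integers with 0 ≤ m ≤ ℓ ≤ i−2. Then Σ_{j=0}^{ℓ−m} (i−j−2)! (−ℓ+j)_m / (ℓ−j)! = [(i−1)! (i−ℓ−2)! / (ℓ! (i−ℓ−1)!)] · [(−ℓ)_m (i−ℓ−1)_m / (i−ℓ)_m]. -/

import Mathlib

/-- The Pochhammer symbol (rising factorial) `(a)_k = a (a+1) ⋯ (a+k-1)`. -/
noncomputable def poch (a : ℝ) (k : ℕ) : ℝ := (ascPochhammer ℝ k).eval a

/-- for integers `0 ≤ m ≤ ℓ ≤ i−2`,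
`Σ_{j=0}^{ℓ−m} (i−j−2)! (−ℓ+j)_m / (ℓ−j)!
 = [(i−1)! (i−ℓ−2)! / (ℓ! (i−ℓ−1)!)] (−ℓ)_m (i−ℓ−1)_m / (i−ℓ)_m`. -/
theorem vandermonde_type_sum (i ℓ m : ℕ) (hm : m ≤ ℓ) (hℓ : ℓ + 2 ≤ i) :
    ∑ j ∈ Finset.range (ℓ - m + 1),
      (Nat.factorial (i - j - 2) : ℝ) * poch ((j : ℝ) - (ℓ : ℝ)) m /
        Nat.factorial (ℓ - j)
    = (Nat.factorial (i - 1) : ℝ) * Nat.factorial (i - ℓ - 2) /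
        (Nat.factorial ℓ * Nat.factorial (i - ℓ - 1)) *
        (poch (-(ℓ : ℝ)) m * poch ((i : ℝ) - (ℓ : ℝ) - 1) m / poch ((i : ℝ) - (ℓ : ℝ)) m) := by
  obtain ⟨c, rfl⟩ : ∃ c, ℓ = m + c := ⟨ℓ - m, by omega⟩
  obtain ⟨b, rfl⟩ : ∃ b, i = m + c + b + 2 := ⟨i - (m + c) - 2, by omega⟩
  have hsum : ∑ j ∈ Finset.range (m + c - m + 1),
      (Nat.factorial (m + c + b + 2 - j - 2) : ℝ) * poch ((j : ℝ) - ((m + c : ℕ) : ℝ)) m /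
        Nat.factorial (m + c - j)
      = ∑ j ∈ Finset.range (c + 1),
        ((-1 : ℝ) ^ m * (b + m).factorial) * (((c - j) + (b + m)).choose (b + m) : ℝ) := by
    rw [show m + c - m = c by omega]
    refine Finset.sum_congr rfl fun j hj => ?_
    have hjc : j ≤ c := by simpa [Nat.lt_succ_iff] using hj
    obtain ⟨d, rfl⟩ : ∃ d, c = j + d := ⟨c - j, by omega⟩
    rw [show m + (j + d) + b + 2 - j - 2 = m + d + b by omega,
        show m + (j + d) - j = m + d by omega, show j + d - j = d by omega]
    have harg : (j : ℝ) - ((m + (j + d) : ℕ) : ℝ) = -(((m + d : ℕ) : ℕ) : ℝ) := by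
      push_cast; ring
    rw [poch, harg, ascPochhammer_eval_neg_eq_descPochhammer,
        descPochhammer_eval_eq_descFactorial]
    have hdesc : ((m + d).descFactorial m : ℝ) = (m + d).factorial / d.factorial := by
      rw [eq_div_iff (by exact_mod_cast d.factorial_ne_zero)]
      have : (m + d).descFactorial m * d.factorial = (m + d).factorial := by
        rw [Nat.descFactorial_eq_factorial_mul_choose]
        have := Nat.choose_mul_factorial_mul_factorial (show m ≤ m + d by omega)
        rw [show m + d - m = d by omega] at this
        linarith [this]
      exact_mod_cast this
    have hch : ((d + (b + m)).choose (b + m) : ℝ)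
        = (d + (b + m)).factorial / (d.factorial * (b + m).factorial) := by
      rw [eq_div_iff (by positivity), ← mul_assoc]
      exact_mod_cast Nat.add_choose_mul_factorial_mul_factorial d (b + m)
    rw [hdesc, hch, show m + d + b = d + (b + m) by omega]
    have h1 : (d.factorial : ℝ) ≠ 0 := by exact_mod_cast d.factorial_ne_zero
    have h2 : ((m + d).factorial : ℝ) ≠ 0 := by exact_mod_cast (m + d).factorial_ne_zero
    have h3 : ((b + m).factorial : ℝ) ≠ 0 := by exact_mod_cast (b + m).factorial_ne_zero
    field_simp
  rw [hsum, ← Finset.mul_sum]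
  have hrefl : ∑ j ∈ Finset.range (c + 1), (((c - j) + (b + m)).choose (b + m) : ℝ)
      = ((c + (b + m) + 1).choose (b + m + 1) : ℝ) := by
    have := Finset.sum_range_reflect (fun k => (((k + (b + m)).choose (b + m) : ℕ) : ℝ)) (c + 1)
    simp only [Nat.add_sub_cancel] at this
    rw [this]
    exact_mod_cast Nat.sum_range_add_choose c (b + m)
  rw [hrefl]
  -- Now the right-hand side
  rw [show m + c + b + 2 - 1 = m + c + b + 1 by omega,
      show m + c + b + 2 - (m + c) - 2 = b by omega,
      show m + c + b + 2 - (m + c) - 1 = b + 1 by omega]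
  have hp1 : poch (-((m + c : ℕ) : ℝ)) m = (-1 : ℝ) ^ m * ((m + c).descFactorial m : ℝ) := by
    rw [poch, ascPochhammer_eval_neg_eq_descPochhammer, descPochhammer_eval_eq_descFactorial]
  have hp2 : poch (((m + c + b + 2 : ℕ) : ℝ) - ((m + c : ℕ) : ℝ) - 1) m
      = ((b + 1).ascFactorial m : ℝ) := by
    rw [poch, show ((m + c + b + 2 : ℕ) : ℝ) - ((m + c : ℕ) : ℝ) - 1 = (((b + 1 : ℕ) : ℕ) : ℝ) by
      push_cast; ring, ← ascPochhammer_eval_cast, ascPochhammer_nat_eq_ascFactorial]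
  have hp3 : poch (((m + c + b + 2 : ℕ) : ℝ) - ((m + c : ℕ) : ℝ)) m
      = ((b + 2).ascFactorial m : ℝ) := by
    rw [poch, show ((m + c + b + 2 : ℕ) : ℝ) - ((m + c : ℕ) : ℝ) = (((b + 2 : ℕ) : ℕ) : ℝ) by
      push_cast; ring, ← ascPochhammer_eval_cast, ascPochhammer_nat_eq_ascFactorial]
  rw [hp1, hp2, hp3]
  -- convert everything to factorials
  have hdesc : ((m + c).descFactorial m : ℝ) = (m + c).factorial / c.factorial := by
    rw [eq_div_iff (by exact_mod_cast c.factorial_ne_zero)]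
    have : (m + c).descFactorial m * c.factorial = (m + c).factorial := by
      rw [Nat.descFactorial_eq_factorial_mul_choose]
      have := Nat.choose_mul_factorial_mul_factorial (show m ≤ m + c by omega)
      rw [show m + c - m = c by omega] at this
      linarith [this]
    exact_mod_cast this
  have hasc1 : ((b + 1).ascFactorial m : ℝ) = (b + m).factorial / b.factorial := by
    rw [eq_div_iff (by exact_mod_cast b.factorial_ne_zero)]
    have := Nat.factorial_mul_ascFactorial b m
    have h : (b.factorial : ℝ) * ((b + 1).ascFactorial m : ℝ) = ((b + m).factorial : ℝ) := by
      exact_mod_cast this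
    linarith [h]
  have hasc2 : ((b + 2).ascFactorial m : ℝ) = (b + 1 + m).factorial / (b + 1).factorial := by
    rw [eq_div_iff (by exact_mod_cast (b + 1).factorial_ne_zero)]
    have := Nat.factorial_mul_ascFactorial (b + 1) m
    have h : ((b + 1).factorial : ℝ) * ((b + 2).ascFactorial m : ℝ)
        = ((b + 1 + m).factorial : ℝ) := by exact_mod_cast this
    linarith [h]
  have hch : ((c + (b + m) + 1).choose (b + m + 1) : ℝ)
      = (c + b + m + 1).factorial / ((b + m + 1).factorial * c.factorial) := by
    rw [eq_div_iff (by positivity)]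
    have := Nat.add_choose_mul_factorial_mul_factorial c (b + m + 1)
    rw [show c + (b + m + 1) = c + (b + m) + 1 by omega] at this
    have h := congrArg (Nat.cast (R := ℝ)) this
    push_cast at h ⊢
    rw [show c + (b + m) + 1 = c + b + m + 1 by omega] at h ⊢
    linarith [h]
  rw [hdesc, hasc1, hasc2, hch]
  have e1 : ((m + c).factorial : ℝ) ≠ 0 := by exact_mod_cast (m + c).factorial_ne_zero
  have e2 : (c.factorial : ℝ) ≠ 0 := by exact_mod_cast c.factorial_ne_zero
  have e3 : (b.factorial : ℝ) ≠ 0 := by exact_mod_cast b.factorial_ne_zero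
  have e4 : ((b + 1).factorial : ℝ) ≠ 0 := by exact_mod_cast (b + 1).factorial_ne_zero
  have e5 : ((b + m).factorial : ℝ) ≠ 0 := by exact_mod_cast (b + m).factorial_ne_zero
  have e6 : ((b + m + 1).factorial : ℝ) ≠ 0 := by exact_mod_cast (b + m + 1).factorial_ne_zero
  have e7 : ((b + 1 + m).factorial : ℝ) ≠ 0 := by exact_mod_cast (b + 1 + m).factorial_ne_zero
  have key : ((b + 1 + m).factorial : ℝ) = (b + m + 1) * (b + m).factorial := by
    rw [show b + 1 + m = b + m + 1 by omega]
    exact_mod_cast Nat.factorial_succ (b + m)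
  have key2 : ((b + m + 1).factorial : ℝ) = (b + m + 1) * (b + m).factorial := by
    exact_mod_cast Nat.factorial_succ (b + m)
  rw [show m + c + b + 1 = c + b + m + 1 by omega, key, key2]
  have e8 : ((b : ℝ) + m + 1) ≠ 0 := by positivity
  field_simp
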